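/- arXiv:1902.00286 — 2 statements merged into one kernel-verified Lean document; each statement's English description precedes it below -/
import Mathlib

section
/- Let γ : ℝⁿ → (0,∞) and suppose a family of kernels B_t satisfies |∂_t B_t(x,y)| ≤ C t^{-(n+4)/4} (1 + √t/γ(x)²)^{-(n+2)} e^{-A|x-y|^{4/3}/t^{1/3}}. Then there exists C' such that for all locally integrable f and all x, ∫_{|x-y| > γ(x)} |f(y)| ∫_{γ(x)^4}^∞ |∂_t B_t(x,y)| dt dy ≤ C' Σ_{k=0}^∞ 2^{-2k} (2^k γ(x))^{-n} ∫_{|x-y| ≤ 2^{k+1} γ(x)} |f(y)| dy ≤ C'' M f(x). -/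
open MeasureTheory Metric Real ENNReal

/-- The Hardy–Littlewood maximal function (centered, over balls). -/
noncomputable def hlMax {n : ℕ} (f : EuclideanSpace ℝ (Fin n) → ℝ)
    (x : EuclideanSpace ℝ (Fin n)) : ℝ≥0∞ :=
  ⨆ r : {r : ℝ // 0 < r},
    (volume (ball x r.1))⁻¹ * ∫⁻ y in ball x r.1, ENNReal.ofReal |f y|

lemma aux_exp_neg_le (m : ℕ) {s : ℝ} (hs : 0 < s) :
    Real.exp (-s) ≤ (Nat.factorial m : ℝ) * s ^ (-(m : ℝ)) := by
  rw [Real.exp_neg, Real.rpow_neg hs.le, Real.rpow_natCast]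
  have h1 : s ^ m / (Nat.factorial m : ℝ) ≤ Real.exp s := by
    calc s ^ m / (Nat.factorial m : ℝ)
        ≤ ∑ i ∈ Finset.range (m + 1), (fun i => s ^ i / (Nat.factorial i : ℝ)) i :=
          Finset.single_le_sum (f := fun i => s ^ i / (Nat.factorial i : ℝ))
            (fun i _ => by positivity) (Finset.self_mem_range_succ m)
      _ ≤ Real.exp s := Real.sum_le_exp_of_nonneg hs.le _
  have h2 : (0:ℝ) < s ^ m / (Nat.factorial m : ℝ) := by positivity
  have h3 := inv_anti₀ h2 h1
  rw [inv_div] at h3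
  calc (Real.exp s)⁻¹ ≤ (Nat.factorial m : ℝ) / s ^ m := h3
    _ = (Nat.factorial m : ℝ) * (s ^ m)⁻¹ := by ring

lemma aux_pointwise (n : ℕ) {C A g r t : ℝ} (hC : 0 < C) (hA : 0 < A) (hg : 0 < g)
    (hr : 0 < r) (ht : g ^ 4 < t) :
    C * t ^ (-((n : ℝ) + 4) / 4) * (1 + Real.sqrt t / g ^ 2) ^ (-((n : ℝ) + 2)) *
      Real.exp (-A * r ^ ((4:ℝ)/3) / t ^ ((1:ℝ)/3)) ≤
    (C * (Nat.factorial (n+2) : ℝ) * A ^ (-((n:ℝ)+2))) * g ^ (2*(n:ℝ)+4) *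
      r ^ (-(4*(n:ℝ)+8)/3) * t ^ (-(5*(n:ℝ)+16)/12) := by
  have ht0 : (0:ℝ) < t := lt_trans (by positivity) ht
  have hN : (0:ℝ) ≤ (n:ℝ) + 2 := by positivity
  have ha : (1 + Real.sqrt t / g ^ 2) ^ (-((n : ℝ) + 2)) ≤
      g ^ (2*(n:ℝ)+4) * t ^ (-((n:ℝ)+2)/2) := by
    have hsq : (0:ℝ) < Real.sqrt t / g ^ 2 := by positivity
    have h1 : (1 + Real.sqrt t / g ^ 2) ^ (-((n : ℝ) + 2)) ≤
        (Real.sqrt t / g ^ 2) ^ (-((n : ℝ) + 2)) :=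
      Real.rpow_le_rpow_of_nonpos hsq (by linarith) (by linarith)
    refine h1.trans_eq ?_
    rw [Real.div_rpow (Real.sqrt_nonneg t) (by positivity), Real.sqrt_eq_rpow,
      ← Real.rpow_mul ht0.le, ← Real.rpow_natCast g 2, ← Real.rpow_mul hg.le,
      show ((2:ℕ):ℝ) = (2:ℝ) from by norm_num,
      show (1:ℝ)/2 * -((n:ℝ)+2) = -((n:ℝ)+2)/2 by ring,
      show (2:ℝ) * -((n:ℝ)+2) = -(2*(n:ℝ)+4) by ring,
      Real.rpow_neg hg.le]
    field_simp
  have hb : Real.exp (-A * r ^ ((4:ℝ)/3) / t ^ ((1:ℝ)/3)) ≤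
      (Nat.factorial (n+2) : ℝ) * A ^ (-((n:ℝ)+2)) * r ^ (-(4*(n:ℝ)+8)/3) * t ^ (((n:ℝ)+2)/3) := by
    have hs : (0:ℝ) < A * r ^ ((4:ℝ)/3) / t ^ ((1:ℝ)/3) := by positivity
    have h1 : -A * r ^ ((4:ℝ)/3) / t ^ ((1:ℝ)/3) = -(A * r ^ ((4:ℝ)/3) / t ^ ((1:ℝ)/3)) := by ring
    rw [h1]
    refine (aux_exp_neg_le (n+2) hs).trans_eq ?_
    have hcast : -((n+2 : ℕ) : ℝ) = -((n:ℝ)+2) := by push_cast; ring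
    rw [hcast, div_eq_mul_inv (A * _), Real.mul_rpow (by positivity) (by positivity),
      Real.mul_rpow hA.le (by positivity), Real.inv_rpow (by positivity),
      ← Real.rpow_neg (by positivity), ← Real.rpow_mul (by positivity : (0:ℝ) ≤ r),
      ← Real.rpow_mul ht0.le,
      show (4:ℝ)/3 * -((n:ℝ)+2) = -(4*(n:ℝ)+8)/3 by ring,
      show (1:ℝ)/3 * -(-((n:ℝ)+2)) = ((n:ℝ)+2)/3 by ring]
    ring
  calc C * t ^ (-((n : ℝ) + 4) / 4) * (1 + Real.sqrt t / g ^ 2) ^ (-((n : ℝ) + 2)) *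
      Real.exp (-A * r ^ ((4:ℝ)/3) / t ^ ((1:ℝ)/3))
      ≤ C * t ^ (-((n : ℝ) + 4) / 4) * (g ^ (2*(n:ℝ)+4) * t ^ (-((n:ℝ)+2)/2)) *
        ((Nat.factorial (n+2) : ℝ) * A ^ (-((n:ℝ)+2)) * r ^ (-(4*(n:ℝ)+8)/3) * t ^ (((n:ℝ)+2)/3)) := by
        have h2 : (0:ℝ) ≤ C * t ^ (-((n : ℝ) + 4) / 4) := by positivity
        have h3 : (0:ℝ) ≤ (1 + Real.sqrt t / g ^ 2) ^ (-((n : ℝ) + 2)) := by positivity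
        have h4 : (0:ℝ) ≤ Real.exp (-A * r ^ ((4:ℝ)/3) / t ^ ((1:ℝ)/3)) := by positivity
        nlinarith [mul_le_mul (mul_le_mul_of_nonneg_left ha h2) hb h4
          (by positivity : (0:ℝ) ≤ C * t ^ (-((n : ℝ) + 4) / 4) *
            (g ^ (2*(n:ℝ)+4) * t ^ (-((n:ℝ)+2)/2)))]
    _ = (C * (Nat.factorial (n+2) : ℝ) * A ^ (-((n:ℝ)+2))) * g ^ (2*(n:ℝ)+4) *
      r ^ (-(4*(n:ℝ)+8)/3) * t ^ (-(5*(n:ℝ)+16)/12) := by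
        rw [show -(5*(n:ℝ)+16)/12 = -((n : ℝ) + 4) / 4 + (-((n:ℝ)+2)/2 + ((n:ℝ)+2)/3) by ring,
          Real.rpow_add ht0, Real.rpow_add ht0]
        ring

lemma aux_inner (n : ℕ) {C A g r : ℝ} (hC : 0 < C) (hA : 0 < A) (hg : 0 < g) (hr : 0 < r)
    (F : ℝ → ℝ)
    (hF : ∀ t, g ^ 4 < t → |F t| ≤ C * t ^ (-((n : ℝ) + 4) / 4) *
      (1 + Real.sqrt t / g ^ 2) ^ (-((n : ℝ) + 2)) *
      Real.exp (-A * r ^ ((4:ℝ)/3) / t ^ ((1:ℝ)/3))) :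
    ∫⁻ t in Set.Ioi (g ^ 4), ENNReal.ofReal |F t| ≤
      ENNReal.ofReal ((C * (Nat.factorial (n+2) : ℝ) * A ^ (-((n:ℝ)+2))) * (12/(5*(n:ℝ)+4)) *
        (g ^ (2*(n:ℝ)+4) * r ^ (-(4*(n:ℝ)+8)/3) * ((g^4:ℝ) ^ (-(5*(n:ℝ)+4)/12)))) := by
  have hc : (0:ℝ) < g ^ 4 := by positivity
  set a : ℝ := -(5*(n:ℝ)+16)/12 with ha_def
  have hn0 : (0:ℝ) ≤ (n:ℝ) := n.cast_nonneg
  have ha : a < -1 := by rw [ha_def]; linarith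
  set D₂ : ℝ := (C * (Nat.factorial (n+2) : ℝ) * A ^ (-((n:ℝ)+2))) * g ^ (2*(n:ℝ)+4) *
      r ^ (-(4*(n:ℝ)+8)/3) with hD₂_def
  have hD₂ : 0 ≤ D₂ := by rw [hD₂_def]; positivity
  calc ∫⁻ t in Set.Ioi (g ^ 4), ENNReal.ofReal |F t|
      ≤ ∫⁻ t in Set.Ioi (g ^ 4), ENNReal.ofReal (D₂ * t ^ a) := by
        refine lintegral_mono_ae ?_
        filter_upwards [ae_restrict_mem measurableSet_Ioi] with t ht'
        refine ENNReal.ofReal_le_ofReal (((hF t ht').trans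
          (aux_pointwise n hC hA hg hr ht')).trans_eq (by rw [hD₂_def, ha_def]))
    _ = ENNReal.ofReal (∫ t in Set.Ioi (g ^ 4), D₂ * t ^ a) := by
        rw [← ofReal_integral_eq_lintegral_ofReal]
        · exact (integrableOn_Ioi_rpow_of_lt ha hc).const_mul D₂
        · filter_upwards [ae_restrict_mem measurableSet_Ioi] with t ht'
          exact mul_nonneg hD₂ (Real.rpow_nonneg (hc.trans ht').le a)
    _ ≤ _ := by
        rw [MeasureTheory.integral_const_mul, integral_Ioi_rpow_of_lt ha hc]
        refine ENNReal.ofReal_le_ofReal (le_of_eq ?_)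
        rw [hD₂_def, ha_def, show -(5*(n:ℝ)+16)/12 + 1 = -(5*(n:ℝ)+4)/12 by ring]
        have h5 : (5*(n:ℝ)+4) ≠ 0 := by linarith
        have h12 : -(5*(n:ℝ)+4)/12 ≠ 0 := fun h => h5 (by linarith [h])
        have hX : -((g ^ 4:ℝ) ^ (-(5 * (n:ℝ) + 4) / 12)) / (-(5 * (n:ℝ) + 4) / 12) =
            12 / (5 * (n:ℝ) + 4) * (g ^ 4:ℝ) ^ (-(5 * (n:ℝ) + 4) / 12) := by
          rw [div_eq_iff h12]
          field_simp
        rw [hX]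
        ring

lemma aux_const (n k : ℕ) {g r : ℝ} (hg : 0 < g) (hkr : 2 ^ k * g < r) :
    g ^ (2*(n:ℝ)+4) * r ^ (-(4*(n:ℝ)+8)/3) * ((g ^ 4 : ℝ) ^ (-(5*(n:ℝ)+4)/12)) ≤
      (2:ℝ) ^ (-2*(k:ℝ)) * ((2:ℝ) ^ k * g) ^ (-(n:ℝ)) := by
  have hn0 : (0:ℝ) ≤ (n:ℝ) := n.cast_nonneg
  have hk0 : (0:ℝ) ≤ (k:ℝ) := k.cast_nonneg
  have h2k : (0:ℝ) < 2 ^ k * g := by positivity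
  have hr0 : (0:ℝ) < r := h2k.trans hkr
  have decomp : ∀ E : ℝ, ((2:ℝ) ^ k * g) ^ E = (2:ℝ) ^ ((k:ℝ) * E) * g ^ E := by
    intro E
    rw [Real.mul_rpow (by positivity) hg.le, ← Real.rpow_natCast 2 k,
      ← Real.rpow_mul (by norm_num)]
  have step1 : r ^ (-(4*(n:ℝ)+8)/3) ≤ ((2:ℝ) ^ k * g) ^ (-(4*(n:ℝ)+8)/3) :=
    Real.rpow_le_rpow_of_nonpos h2k hkr.le (by linarith)
  calc g ^ (2*(n:ℝ)+4) * r ^ (-(4*(n:ℝ)+8)/3) * ((g ^ 4 : ℝ) ^ (-(5*(n:ℝ)+4)/12))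
      ≤ g ^ (2*(n:ℝ)+4) * (((2:ℝ) ^ k * g) ^ (-(4*(n:ℝ)+8)/3)) *
        ((g ^ 4 : ℝ) ^ (-(5*(n:ℝ)+4)/12)) := by
        have h1 : (0:ℝ) ≤ g ^ (2*(n:ℝ)+4) := by positivity
        have h2 : (0:ℝ) ≤ (g ^ 4 : ℝ) ^ (-(5*(n:ℝ)+4)/12) := by positivity
        exact mul_le_mul_of_nonneg_right (mul_le_mul_of_nonneg_left step1 h1) h2
    _ = (2:ℝ) ^ ((k:ℝ) * (-(4*(n:ℝ)+8)/3)) * g ^ (-(n:ℝ)) := by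
        have e4 : (g ^ 4 : ℝ) ^ (-(5*(n:ℝ)+4)/12) = g ^ ((4:ℝ) * (-(5*(n:ℝ)+4)/12)) := by
          rw [← Real.rpow_natCast g 4, ← Real.rpow_mul hg.le]
          norm_num
        have e5 : g ^ (2*(n:ℝ)+4) * g ^ (-(4*(n:ℝ)+8)/3) * g ^ ((4:ℝ) * (-(5*(n:ℝ)+4)/12)) =
            g ^ (-(n:ℝ)) := by
          rw [← Real.rpow_add hg, ← Real.rpow_add hg]
          congr 1
          ring
        rw [decomp, e4, ← e5]
        generalize g ^ (2*(n:ℝ)+4) = X1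
        generalize g ^ (-(4*(n:ℝ)+8)/3) = X2
        generalize g ^ ((4:ℝ) * (-(5*(n:ℝ)+4)/12)) = X3
        generalize (2:ℝ) ^ ((k:ℝ) * (-(4*(n:ℝ)+8)/3)) = Y
        ring
    _ ≤ (2:ℝ) ^ (-2*(k:ℝ) + (k:ℝ) * (-(n:ℝ))) * g ^ (-(n:ℝ)) := by
        refine mul_le_mul_of_nonneg_right
          (Real.rpow_le_rpow_of_exponent_le one_le_two (by nlinarith)) (by positivity)
    _ = (2:ℝ) ^ (-2*(k:ℝ)) * ((2:ℝ) ^ k * g) ^ (-(n:ℝ)) := by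
        rw [decomp, Real.rpow_add two_pos, mul_assoc]

lemma aux_cover {g r : ℝ} (hg : 0 < g) (hr : g < r) :
    ∃ k : ℕ, 2 ^ k * g < r ∧ r ≤ 2 ^ (k+1) * g := by
  have hex : ∃ m : ℕ, r ≤ 2 ^ (m+1) * g := by
    obtain ⟨m, hm⟩ := pow_unbounded_of_one_lt (r / g) one_lt_two
    rw [div_lt_iff₀ hg] at hm
    refine ⟨m, le_of_lt (hm.trans_le ?_)⟩
    have h1 : (2:ℝ) ^ m ≤ 2 ^ (m+1) := by
      apply pow_le_pow_right₀ one_le_two (Nat.le_succ m)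
    nlinarith
  classical
  refine ⟨Nat.find hex, ?_, Nat.find_spec hex⟩
  rcases Nat.eq_zero_or_pos (Nat.find hex) with h | h
  · rw [h]; simpa using hr
  · obtain ⟨m, hm⟩ : ∃ m, Nat.find hex = m + 1 :=
      ⟨Nat.find hex - 1, (Nat.succ_pred_eq_of_pos h).symm⟩
    have h2 := Nat.find_min hex (show m < Nat.find hex by omega)
    push_neg at h2
    rw [hm]
    exact h2

lemma aux_ball {n : ℕ} (f : EuclideanSpace ℝ (Fin n) → ℝ) (x : EuclideanSpace ℝ (Fin n))
    {ρ : ℝ} (hρ : 0 < ρ) :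
    ∫⁻ y in ball x ρ, ENNReal.ofReal |f y| ≤ volume (ball x ρ) * hlMax f x := by
  have hpos : 0 < volume (ball x ρ) := measure_ball_pos volume x hρ
  have hfin : volume (ball x ρ) < ⊤ := measure_ball_lt_top
  have hle : (volume (ball x ρ))⁻¹ * ∫⁻ y in ball x ρ, ENNReal.ofReal |f y| ≤ hlMax f x :=
    le_iSup (fun r : {r : ℝ // 0 < r} =>
      (volume (ball x r.1))⁻¹ * ∫⁻ y in ball x r.1, ENNReal.ofReal |f y|) ⟨ρ, hρ⟩
  calc ∫⁻ y in ball x ρ, ENNReal.ofReal |f y|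
      = volume (ball x ρ) * ((volume (ball x ρ))⁻¹ *
        ∫⁻ y in ball x ρ, ENNReal.ofReal |f y|) := by
        rw [← mul_assoc, ENNReal.mul_inv_cancel hpos.ne' hfin.ne, one_mul]
    _ ≤ volume (ball x ρ) * hlMax f x := mul_le_mul_right hle _
/-- Estimate of the term `J₃₁`: with the decay
`|∂_t B_t(x,y)| ≤ C t^{-(n+4)/4}(1+√t/γ(x)²)^{-(n+2)} e^{-A|x-y|^{4/3}/t^{1/3}}`, the integral
`∫_{|x-y|>γ(x)} |f(y)| ∫_{γ(x)⁴}^∞ |∂_t B_t(x,y)| dt dy` is dominated by the dyadic sum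
`C' Σ_k 2^{-2k}(2^kγ(x))^{-n} ∫_{|x-y|≤2^{k+1}γ(x)} |f|`, hence by `C'' M f(x)`. -/
theorem J31_estimate (n : ℕ) (hn : 1 ≤ n) (C A : ℝ) (hC : 0 < C) (hA : 0 < A)
    (γ : EuclideanSpace ℝ (Fin n) → ℝ) (hγ : ∀ x, 0 < γ x)
    (B : ℝ → EuclideanSpace ℝ (Fin n) → EuclideanSpace ℝ (Fin n) → ℝ)
    (hB : ∀ (x y : EuclideanSpace ℝ (Fin n)) (t : ℝ), 0 < t →
      |deriv (fun s => B s x y) t| ≤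
        C * t ^ (-((n : ℝ) + 4) / 4) * (1 + Real.sqrt t / γ x ^ 2) ^ (-((n : ℝ) + 2)) *
          Real.exp (-A * ‖x - y‖ ^ ((4 : ℝ) / 3) / t ^ ((1 : ℝ) / 3))) :
    ∃ C' > 0, ∃ C'' > 0, ∀ f : EuclideanSpace ℝ (Fin n) → ℝ, LocallyIntegrable f volume →
      ∀ x : EuclideanSpace ℝ (Fin n),
        ((∫⁻ y in {y | γ x < ‖x - y‖}, ENNReal.ofReal |f y| *
            ∫⁻ t in Set.Ioi (γ x ^ 4), ENNReal.ofReal |deriv (fun s => B s x y) t|) ≤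
          ENNReal.ofReal C' * ∑' k : ℕ,
            ENNReal.ofReal ((2 : ℝ) ^ (-2 * (k : ℝ)) * ((2 : ℝ) ^ k * γ x) ^ (-(n : ℝ))) *
              ∫⁻ y in closedBall x ((2 : ℝ) ^ (k + 1) * γ x), ENNReal.ofReal |f y|) ∧
        ((ENNReal.ofReal C' * ∑' k : ℕ,
            ENNReal.ofReal ((2 : ℝ) ^ (-2 * (k : ℝ)) * ((2 : ℝ) ^ k * γ x) ^ (-(n : ℝ))) *
              ∫⁻ y in closedBall x ((2 : ℝ) ^ (k + 1) * γ x), ENNReal.ofReal |f y|) ≤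
          ENNReal.ofReal C'' * hlMax f x) := by
  haveI : Nonempty (Fin n) := Fin.pos_iff_nonempty.mp hn
  set V : ℝ := (volume (ball (0 : EuclideanSpace ℝ (Fin n)) 1)).toReal with hV_def
  have hVpos : 0 < volume (ball (0 : EuclideanSpace ℝ (Fin n)) 1) :=
    measure_ball_pos volume _ one_pos
  have hVfin : volume (ball (0 : EuclideanSpace ℝ (Fin n)) 1) < ⊤ := measure_ball_lt_top
  have hV : 0 < V := ENNReal.toReal_pos hVpos.ne' hVfin.ne
  have hfact : (0:ℝ) < (Nat.factorial (n+2) : ℝ) := by exact_mod_cast Nat.factorial_pos (n+2)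
  have hApow : (0:ℝ) < A ^ (-((n:ℝ)+2)) := Real.rpow_pos_of_pos hA _
  have hn5 : (0:ℝ) < 5*(n:ℝ)+4 := by positivity
  refine ⟨C * (Nat.factorial (n+2) : ℝ) * A ^ (-((n:ℝ)+2)) * (12/(5*(n:ℝ)+4)),
    by positivity,
    C * (Nat.factorial (n+2) : ℝ) * A ^ (-((n:ℝ)+2)) * (12/(5*(n:ℝ)+4)) * (4/3) * (4^n * V),
    by positivity, fun f hf x => ?_⟩
  set C' : ℝ := C * (Nat.factorial (n+2) : ℝ) * A ^ (-((n:ℝ)+2)) * (12/(5*(n:ℝ)+4))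
    with hC'_def
  have hC' : 0 < C' := by rw [hC'_def]; positivity
  set g : ℝ := γ x with hg_def
  have hg : 0 < g := hγ x
  have hm : Measurable fun y : EuclideanSpace ℝ (Fin n) => ‖x - y‖ :=
    (continuous_const.sub continuous_id).norm.measurable
  set Ak : ℕ → Set (EuclideanSpace ℝ (Fin n)) := fun k =>
    {y | 2 ^ k * g < ‖x - y‖} ∩ {y | ‖x - y‖ ≤ 2 ^ (k+1) * g} with hAk_def
  have hAk_meas : ∀ k, MeasurableSet (Ak k) := fun k =>
    (measurableSet_lt measurable_const hm).inter (measurableSet_le hm measurable_const)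
  have hW : ∀ k : ℕ, (0:ℝ) ≤ (2 : ℝ) ^ (-2 * (k : ℝ)) * ((2 : ℝ) ^ k * g) ^ (-(n : ℝ)) :=
    fun k => by positivity
  -- inner integral bound
  have hIy : ∀ (k : ℕ) (y : EuclideanSpace ℝ (Fin n)), 2 ^ k * g < ‖x - y‖ →
      (∫⁻ t in Set.Ioi (g ^ 4), ENNReal.ofReal |deriv (fun s => B s x y) t|) ≤
        ENNReal.ofReal (C' *
          ((2 : ℝ) ^ (-2 * (k : ℝ)) * ((2 : ℝ) ^ k * g) ^ (-(n : ℝ)))) := by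
    intro k y hy
    have hr0 : (0:ℝ) < ‖x - y‖ := lt_of_le_of_lt (by positivity) hy
    refine (aux_inner n hC hA hg hr0 _
      (fun t ht => hB x y t (lt_trans (by positivity) ht))).trans ?_
    apply ENNReal.ofReal_le_ofReal
    calc C * (Nat.factorial (n+2) : ℝ) * A ^ (-((n:ℝ)+2)) * (12/(5*(n:ℝ)+4)) *
        (g ^ (2*(n:ℝ)+4) * ‖x - y‖ ^ (-(4*(n:ℝ)+8)/3) * ((g^4:ℝ) ^ (-(5*(n:ℝ)+4)/12)))
        ≤ C * (Nat.factorial (n+2) : ℝ) * A ^ (-((n:ℝ)+2)) * (12/(5*(n:ℝ)+4)) *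
          ((2 : ℝ) ^ (-2 * (k : ℝ)) * ((2 : ℝ) ^ k * g) ^ (-(n : ℝ))) :=
          mul_le_mul_of_nonneg_left (aux_const n k hg hy) (by positivity)
      _ = C' * ((2 : ℝ) ^ (-2 * (k : ℝ)) * ((2 : ℝ) ^ k * g) ^ (-(n : ℝ))) := by
          rw [hC'_def]
  -- per-annulus bound
  have perk : ∀ k : ℕ, (∫⁻ y in Ak k, ENNReal.ofReal |f y| *
      ∫⁻ t in Set.Ioi (g ^ 4), ENNReal.ofReal |deriv (fun s => B s x y) t|) ≤
      ENNReal.ofReal C' *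
        (ENNReal.ofReal ((2 : ℝ) ^ (-2 * (k : ℝ)) * ((2 : ℝ) ^ k * g) ^ (-(n : ℝ))) *
        ∫⁻ y in closedBall x ((2:ℝ) ^ (k+1) * g), ENNReal.ofReal |f y|) := by
    intro k
    calc (∫⁻ y in Ak k, ENNReal.ofReal |f y| *
        ∫⁻ t in Set.Ioi (g ^ 4), ENNReal.ofReal |deriv (fun s => B s x y) t|)
        ≤ ∫⁻ y in Ak k, ENNReal.ofReal |f y| * ENNReal.ofReal (C' *
            ((2 : ℝ) ^ (-2 * (k : ℝ)) * ((2 : ℝ) ^ k * g) ^ (-(n : ℝ)))) := by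
          refine lintegral_mono_ae ?_
          filter_upwards [ae_restrict_mem (hAk_meas k)] with y hy
          exact mul_le_mul_right (hIy k y hy.1) _
      _ = (∫⁻ y in Ak k, ENNReal.ofReal |f y|) * ENNReal.ofReal (C' *
            ((2 : ℝ) ^ (-2 * (k : ℝ)) * ((2 : ℝ) ^ k * g) ^ (-(n : ℝ)))) :=
          lintegral_mul_const' _ _ ENNReal.ofReal_ne_top
      _ ≤ (∫⁻ y in closedBall x ((2:ℝ) ^ (k+1) * g), ENNReal.ofReal |f y|) *
          ENNReal.ofReal (C' *
            ((2 : ℝ) ^ (-2 * (k : ℝ)) * ((2 : ℝ) ^ k * g) ^ (-(n : ℝ)))) := by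
          refine mul_le_mul_left (lintegral_mono_set ?_) _
          intro y hy
          have hd : dist y x ≤ 2 ^ (k+1) * g := by
            rw [dist_comm, dist_eq_norm]
            exact hy.2
          exact hd
      _ = ENNReal.ofReal C' *
          (ENNReal.ofReal ((2 : ℝ) ^ (-2 * (k : ℝ)) * ((2 : ℝ) ^ k * g) ^ (-(n : ℝ))) *
          ∫⁻ y in closedBall x ((2:ℝ) ^ (k+1) * g), ENNReal.ofReal |f y|) := by
          rw [ENNReal.ofReal_mul hC'.le]
          ring
  constructor
  · calc (∫⁻ y in {y | g < ‖x - y‖}, ENNReal.ofReal |f y| *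
        ∫⁻ t in Set.Ioi (g ^ 4), ENNReal.ofReal |deriv (fun s => B s x y) t|)
        ≤ ∫⁻ y in ⋃ k, Ak k, ENNReal.ofReal |f y| *
          ∫⁻ t in Set.Ioi (g ^ 4), ENNReal.ofReal |deriv (fun s => B s x y) t| := by
          refine lintegral_mono_set ?_
          intro y hy
          obtain ⟨k, h1, h2⟩ := aux_cover hg hy
          exact Set.mem_iUnion.2 ⟨k, h1, h2⟩
      _ ≤ ∑' k : ℕ, ∫⁻ y in Ak k, ENNReal.ofReal |f y| *
          ∫⁻ t in Set.Ioi (g ^ 4), ENNReal.ofReal |deriv (fun s => B s x y) t| :=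
          lintegral_iUnion_le _ _
      _ ≤ ∑' k : ℕ, ENNReal.ofReal C' *
          (ENNReal.ofReal ((2 : ℝ) ^ (-2 * (k : ℝ)) * ((2 : ℝ) ^ k * g) ^ (-(n : ℝ))) *
          ∫⁻ y in closedBall x ((2:ℝ) ^ (k+1) * g), ENNReal.ofReal |f y|) :=
          ENNReal.tsum_le_tsum perk
      _ = ENNReal.ofReal C' * ∑' k : ℕ,
          ENNReal.ofReal ((2 : ℝ) ^ (-2 * (k : ℝ)) * ((2 : ℝ) ^ k * g) ^ (-(n : ℝ))) *
          ∫⁻ y in closedBall x ((2:ℝ) ^ (k+1) * g), ENNReal.ofReal |f y| := by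
          rw [ENNReal.tsum_mul_left]
  · have hterm : ∀ k : ℕ,
        (ENNReal.ofReal ((2 : ℝ) ^ (-2 * (k : ℝ)) * ((2 : ℝ) ^ k * g) ^ (-(n : ℝ))) *
          ∫⁻ y in closedBall x ((2:ℝ) ^ (k+1) * g), ENNReal.ofReal |f y|) ≤
        ENNReal.ofReal ((1/4:ℝ) ^ k) * (ENNReal.ofReal (4^n * V) * hlMax f x) := by
      intro k
      have hR' : (0:ℝ) < 2 ^ (k+2) * g := by positivity
      have h2k : (0:ℝ) < 2 ^ k * g := by positivity
      have hsub : closedBall x ((2:ℝ) ^ (k+1) * g) ⊆ ball x ((2:ℝ) ^ (k+2) * g) := by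
        apply closedBall_subset_ball
        have h1 : (2:ℝ) ^ (k+2) = 2 * 2 ^ (k+1) := by ring
        nlinarith [pow_pos (by norm_num : (0:ℝ) < 2) (k+1)]
      have hvol : volume (ball x ((2:ℝ) ^ (k+2) * g)) =
          ENNReal.ofReal (((2:ℝ) ^ (k+2) * g) ^ n) * ENNReal.ofReal V := by
        rw [Measure.addHaar_ball volume x hR'.le, finrank_euclideanSpace_fin,
          ENNReal.ofReal_toReal hVfin.ne]
      have hgeo : (2:ℝ) ^ (-2 * (k:ℝ)) = (1/4:ℝ) ^ k := by
        have h24 : (2:ℝ) ^ (-2:ℝ) = 1/4 := by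
          rw [show ((-2):ℝ) = ((-2:ℤ):ℝ) by norm_num, Real.rpow_intCast]
          norm_num
        rw [Real.rpow_mul (by norm_num : (0:ℝ) ≤ 2), h24, Real.rpow_natCast]
      have hwk : ((2 : ℝ) ^ (-2 * (k : ℝ)) * ((2 : ℝ) ^ k * g) ^ (-(n : ℝ))) *
          ((2:ℝ) ^ (k+2) * g) ^ n = (1/4:ℝ) ^ k * 4 ^ n := by
        have e1 : ((2:ℝ) ^ k * g) ^ (-(n:ℝ)) = (((2:ℝ) ^ k * g) ^ n)⁻¹ := by
          rw [Real.rpow_neg h2k.le, Real.rpow_natCast]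
        have e2 : ((2:ℝ) ^ (k+2) * g) ^ n = 4 ^ n * ((2:ℝ) ^ k * g) ^ n := by
          rw [← mul_pow]
          congr 1
          ring
        rw [hgeo, e1, e2]
        field_simp
      calc (ENNReal.ofReal ((2 : ℝ) ^ (-2 * (k : ℝ)) * ((2 : ℝ) ^ k * g) ^ (-(n : ℝ))) *
            ∫⁻ y in closedBall x ((2:ℝ) ^ (k+1) * g), ENNReal.ofReal |f y|)
          ≤ ENNReal.ofReal ((2 : ℝ) ^ (-2 * (k : ℝ)) * ((2 : ℝ) ^ k * g) ^ (-(n : ℝ))) *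
            (volume (ball x ((2:ℝ) ^ (k+2) * g)) * hlMax f x) :=
            mul_le_mul_right ((lintegral_mono_set hsub).trans (aux_ball f x hR')) _
        _ = ENNReal.ofReal (((2 : ℝ) ^ (-2 * (k : ℝ)) * ((2 : ℝ) ^ k * g) ^ (-(n : ℝ))) *
            ((2:ℝ) ^ (k+2) * g) ^ n) * (ENNReal.ofReal V * hlMax f x) := by
            rw [hvol, ENNReal.ofReal_mul (hW k)]
            ring
        _ = ENNReal.ofReal ((1/4:ℝ) ^ k * 4 ^ n) * (ENNReal.ofReal V * hlMax f x) := by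
            rw [hwk]
        _ = ENNReal.ofReal ((1/4:ℝ) ^ k) * (ENNReal.ofReal (4^n * V) * hlMax f x) := by
            rw [ENNReal.ofReal_mul (by positivity), ENNReal.ofReal_mul (by positivity)]
            ring
    have hsum : ∑' k : ℕ, ENNReal.ofReal ((1/4:ℝ) ^ k) = ENNReal.ofReal (4/3 : ℝ) := by
      rw [← ENNReal.ofReal_tsum_of_nonneg (fun k => by positivity)
        (summable_geometric_of_lt_one (by norm_num) (by norm_num)),
        tsum_geometric_of_lt_one (by norm_num) (by norm_num)]
      norm_num
    calc ENNReal.ofReal C' * ∑' k : ℕ,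
        ENNReal.ofReal ((2 : ℝ) ^ (-2 * (k : ℝ)) * ((2 : ℝ) ^ k * g) ^ (-(n : ℝ))) *
          ∫⁻ y in closedBall x ((2:ℝ) ^ (k+1) * g), ENNReal.ofReal |f y|
        ≤ ENNReal.ofReal C' * ∑' k : ℕ,
          ENNReal.ofReal ((1/4:ℝ) ^ k) * (ENNReal.ofReal (4^n * V) * hlMax f x) :=
          mul_le_mul_right (ENNReal.tsum_le_tsum hterm) _
      _ = ENNReal.ofReal C' * ((∑' k : ℕ, ENNReal.ofReal ((1/4:ℝ) ^ k)) *
          (ENNReal.ofReal (4^n * V) * hlMax f x)) := by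
          rw [ENNReal.tsum_mul_right]
      _ = ENNReal.ofReal (C' * (4/3) * (4^n * V)) * hlMax f x := by
          rw [hsum, ENNReal.ofReal_mul (by positivity : (0:ℝ) ≤ C' * (4/3)),
            ENNReal.ofReal_mul hC'.le]
          ring
      _ = ENNReal.ofReal (C * (Nat.factorial (n+2) : ℝ) * A ^ (-((n:ℝ)+2)) *
            (12/(5*(n:ℝ)+4)) * (4/3) * (4^n * V)) * hlMax f x := by
          rw [hC'_def]
end

section
/- Suppose for every ρ > 2 and 1 < p < ∞ the variation operator V_ρ(e^{-tL}) is bounded on L^p(ℝⁿ) with norm C_p. Define the generalized Poisson operator P^σ_{t,L} f = (1/Γ(σ)) ∫_0^∞ e^{-r} e^{-t²L/(4r)} f r^{σ-1} dr for 0 < σ < 1. Then V_ρ(P^σ_{t,L}) is bounded on L^p(ℝⁿ): ‖V_ρ(P^σ_{t,L}) f‖_p ≤ C_p ‖f‖_p. -/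
open Filter MeasureTheory Real ENNReal

/-- The ρ-variation seminorm of a function `u : (0,∞) → ℝ`:
the supremum over all positive strictly decreasing sequences tending to `0`. -/
noncomputable def eVar (ρ : ℝ) (u : ℝ → ℝ) : ℝ≥0∞ :=
  ⨆ t : {t : ℕ → ℝ // StrictAnti t ∧ (∀ i, 0 < t i) ∧ Tendsto t atTop (nhds 0)},
    (∑' i : ℕ, (ENNReal.ofReal |u (t.1 i) - u (t.1 (i + 1))|) ^ ρ) ^ (1 / ρ)


/-- Minkowski's integral inequality, ℓ^ρ(ℕ)-valued. -/
lemma minkowski_tsum {α : Type*} [MeasurableSpace α] (μ : Measure α) {ρ : ℝ} (hρ : 1 < ρ)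
    (G : ℕ → α → ℝ≥0∞) (hG : ∀ i, AEMeasurable (G i) μ) :
    (∑' i, (∫⁻ a, G i a ∂μ) ^ ρ) ^ (1 / ρ) ≤ ∫⁻ a, (∑' i, G i a ^ ρ) ^ (1 / ρ) ∂μ := by
  have hρ0 : (0:ℝ) < ρ := by linarith
  have hρ0' : ρ ≠ 0 := ne_of_gt hρ0
  set Φ : α → ℝ≥0∞ := fun a => (∑' i, G i a ^ ρ) ^ (1 / ρ) with hΦ
  set R : ℝ≥0∞ := ∫⁻ a, Φ a ∂μ with hR
  rcases eq_or_ne R ∞ with hRtop | hRtop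
  · exact hRtop ▸ le_top
  set A : ℕ → ℝ≥0∞ := fun i => ∫⁻ a, G i a ∂μ with hA
  have hGΦ : ∀ i a, G i a ≤ Φ a := by
    intro i a
    have h1 : G i a ^ ρ ≤ ∑' j, G j a ^ ρ := ENNReal.le_tsum i
    calc G i a = (G i a ^ ρ) ^ (1/ρ) := by
          rw [← ENNReal.rpow_mul, mul_one_div_cancel hρ0', ENNReal.rpow_one]
      _ ≤ Φ a := ENNReal.rpow_le_rpow h1 (by positivity)
  have hAR : ∀ i, A i ≤ R := fun i => lintegral_mono (fun a => hGΦ i a)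
  have hAne : ∀ i, A i ≠ ∞ := fun i => ne_top_of_le_ne_top hRtop (hAR i)
  set q : ℝ := ρ / (ρ - 1) with hq
  have hconj : ρ.HolderConjugate q := .conjExponent hρ
  have hq0 : (0:ℝ) < q := hconj.symm.pos
  have hfin : ∀ s : Finset ℕ, ∑ i ∈ s, A i ^ ρ ≤ R ^ ρ := by
    intro s
    set T : ℝ≥0∞ := ∑ i ∈ s, A i ^ ρ with hT
    have hTne : T ≠ ∞ := by
      rw [hT]
      exact (ENNReal.sum_lt_top.2 fun i _ =>
        ENNReal.rpow_lt_top_of_nonneg (le_of_lt hρ0) (hAne i)).ne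
    rcases eq_or_ne T 0 with hT0 | hT0
    · rw [hT0]; positivity
    set F : ℕ → ℝ≥0∞ := fun i => if i ∈ s then A i ^ (ρ - 1) else 0 with hF
    have hFq : ∑' i, F i ^ q = T := by
      rw [tsum_eq_sum (s := s) (by
        intro i hi
        simp only [hF, if_neg hi]
        exact ENNReal.zero_rpow_of_pos hq0)]
      refine Finset.sum_congr rfl fun i hi => ?_
      simp only [hF, if_pos hi]
      rw [← ENNReal.rpow_mul, hconj.sub_one_mul_conj]
    -- pointwise Hölder
    have hpt : ∀ a, ∑ i ∈ s, A i ^ (ρ - 1) * G i a ≤ T ^ (1/q) * Φ a := by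
      intro a
      have hsum : ∑ i ∈ s, A i ^ (ρ - 1) * G i a = ∑' i, F i * G i a := by
        rw [tsum_eq_sum (s := s) (by intro i hi; simp [hF, if_neg hi])]
        exact Finset.sum_congr rfl fun i hi => by simp [hF, if_pos hi]
      rw [hsum]
      have := ENNReal.lintegral_mul_le_Lp_mul_Lq (Measure.count : Measure ℕ) hconj.symm
        (f := F) (g := fun i => G i a) (measurable_of_countable _).aemeasurable
        (measurable_of_countable _).aemeasurable
      simp only [Pi.mul_apply, lintegral_count] at this
      calc ∑' i, F i * G i a ≤ (∑' i, F i ^ q) ^ (1/q) * (∑' i, G i a ^ ρ) ^ (1/ρ) := this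
        _ = T ^ (1/q) * Φ a := by rw [hFq]
    have hstep : T ≤ T ^ (1/q) * R := by
      have h1 : T = ∫⁻ a, ∑ i ∈ s, A i ^ (ρ - 1) * G i a ∂μ := by
        rw [MeasureTheory.lintegral_finset_sum' s (fun i _ => ((hG i).const_mul _))]
        refine Finset.sum_congr rfl fun i hi => ?_
        rw [MeasureTheory.lintegral_const_mul' _ _
          (ENNReal.rpow_ne_top_of_nonneg (by linarith) (hAne i)),
          show (∫⁻ a, G i a ∂μ) = A i from rfl]
        have : A i ^ ρ = A i ^ (ρ - 1) * A i ^ (1:ℝ) := by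
          rw [← ENNReal.rpow_add_of_nonneg (x := A i) (ρ - 1) 1 (by linarith) zero_le_one,
            sub_add_cancel]
        rw [this, ENNReal.rpow_one]
      calc T = ∫⁻ a, ∑ i ∈ s, A i ^ (ρ - 1) * G i a ∂μ := h1
        _ ≤ ∫⁻ a, T ^ (1/q) * Φ a ∂μ := lintegral_mono hpt
        _ = T ^ (1/q) * R := lintegral_const_mul' _ _
            (ENNReal.rpow_ne_top_of_nonneg (by positivity) hTne)
    have hTq0 : T ^ (1/q) ≠ 0 := by
      simp only [ne_eq, ENNReal.rpow_eq_zero_iff, not_or, not_and_or]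
      exact ⟨Or.inl hT0, Or.inl hTne⟩
    have hTqt : T ^ (1/q) ≠ ∞ := ENNReal.rpow_ne_top_of_nonneg (by positivity) hTne
    have h2 : T * (T ^ (1/q))⁻¹ ≤ R := by
      calc T * (T ^ (1/q))⁻¹ ≤ (T ^ (1/q) * R) * (T ^ (1/q))⁻¹ := mul_le_mul_left hstep _
        _ = R * (T ^ (1/q) * (T ^ (1/q))⁻¹) := by ring
        _ = R := by rw [ENNReal.mul_inv_cancel hTq0 hTqt, mul_one]
    have h3 : T ^ (1/ρ) = T * (T ^ (1/q))⁻¹ := by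
      have hexp : 1/ρ = 1 + -(1/q) := by
        have := hconj.inv_add_inv_eq_one
        rw [one_div, one_div]; linarith
      rw [hexp, ENNReal.rpow_add _ _ hT0 hTne, ENNReal.rpow_one, ENNReal.rpow_neg]
    have h4 : T ^ (1/ρ) ≤ R := h3 ▸ h2
    calc T = (T ^ (1/ρ)) ^ ρ := by
          rw [← ENNReal.rpow_mul, one_div_mul_cancel hρ0', ENNReal.rpow_one]
      _ ≤ R ^ ρ := ENNReal.rpow_le_rpow h4 (le_of_lt hρ0)
  have htot : ∑' i, A i ^ ρ ≤ R ^ ρ := by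
    rw [ENNReal.tsum_eq_iSup_sum]; exact iSup_le hfin
  calc (∑' i, A i ^ ρ) ^ (1/ρ) ≤ (R ^ ρ) ^ (1/ρ) := ENNReal.rpow_le_rpow htot (by positivity)
    _ = R := by rw [← ENNReal.rpow_mul, mul_one_div_cancel hρ0', ENNReal.rpow_one]

lemma evar_seq_le (ρ : ℝ) (u : ℝ → ℝ) (s : ℕ → ℝ)
    (hs : StrictAnti s ∧ (∀ i, 0 < s i) ∧ Tendsto s atTop (nhds 0)) :
    (∑' i : ℕ, (ENNReal.ofReal |u (s i) - u (s (i + 1))|) ^ ρ) ^ (1 / ρ) ≤ eVar ρ u :=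
  le_iSup (fun t : {t : ℕ → ℝ // StrictAnti t ∧ (∀ i, 0 < t i) ∧ Tendsto t atTop (nhds 0)} =>
    (∑' i : ℕ, (ENNReal.ofReal |u (t.1 i) - u (t.1 (i + 1))|) ^ ρ) ^ (1 / ρ)) ⟨s, hs⟩

lemma evar_pair_lt {ρ : ℝ} (hρ0 : 0 < ρ) (u : ℝ → ℝ) {a b : ℝ} (hb : 0 < b)
    (hab : b < a) : ENNReal.ofReal |u a - u b| ≤ eVar ρ u := by
  set s : ℕ → ℝ := fun i => if i = 0 then a else b * (1/2)^(i-1) with hs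
  have hs0 : s 0 = a := rfl
  have hs1 : s 1 = b := by simp [hs]
  have hpos : ∀ i, 0 < s i := by
    intro i
    rcases Nat.eq_zero_or_pos i with h | h
    · rw [h, hs0]; linarith
    · simp only [hs, if_neg (show ¬ i = 0 by omega)]; positivity
  have hanti : StrictAnti s := by
    apply strictAnti_nat_of_succ_lt
    intro n
    rcases Nat.eq_zero_or_pos n with h | h
    · rw [h, hs0, show s 1 = b from hs1]; exact hab
    · simp only [hs, if_neg (Nat.succ_ne_zero n), if_neg (show ¬ n = 0 by omega)]
      have h2 : n + 1 - 1 = (n - 1) + 1 := by omega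
      rw [h2]
      have hp : (0:ℝ) < (1/2)^(n-1) := by positivity
      rw [pow_succ]
      nlinarith
  have htend : Tendsto s atTop (nhds 0) := by
    have hg : Tendsto (fun i : ℕ => b * (1/2:ℝ)^(i-1)) atTop (nhds 0) := by
      have h1 : Tendsto (fun n : ℕ => (1/2:ℝ)^n) atTop (nhds 0) :=
        tendsto_pow_atTop_nhds_zero_of_lt_one (by norm_num) (by norm_num)
      have h2 : Tendsto (fun i : ℕ => i - 1) atTop atTop := tendsto_sub_atTop_nat 1
      have := (h1.comp h2).const_mul b
      simpa using this
    apply hg.congr'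
    filter_upwards [eventually_ge_atTop 1] with i hi
    simp only [hs, if_neg (show ¬ i = 0 by omega)]
  calc ENNReal.ofReal |u a - u b|
      = ((ENNReal.ofReal |u a - u b|) ^ ρ) ^ (1/ρ) := by
        rw [← ENNReal.rpow_mul, mul_one_div_cancel (ne_of_gt hρ0), ENNReal.rpow_one]
    _ ≤ (∑' i : ℕ, (ENNReal.ofReal |u (s i) - u (s (i + 1))|) ^ ρ) ^ (1/ρ) := by
        apply ENNReal.rpow_le_rpow _ (by positivity)
        have := ENNReal.le_tsum (f := fun i : ℕ =>
          (ENNReal.ofReal |u (s i) - u (s (i + 1))|) ^ ρ) 0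
        simpa [hs0, hs1] using this
    _ ≤ eVar ρ u := evar_seq_le ρ u s ⟨hanti, hpos, htend⟩

lemma evar_pair {ρ : ℝ} (hρ0 : 0 < ρ) (u : ℝ → ℝ) {a b : ℝ} (ha : 0 < a) (hb : 0 < b) :
    ENNReal.ofReal |u a - u b| ≤ eVar ρ u := by
  rcases lt_trichotomy b a with h | h | h
  · exact evar_pair_lt hρ0 u hb h
  · simp [h]
  · rw [abs_sub_comm]
    exact evar_pair_lt hρ0 u ha h


lemma aemeas_scale {v : ℝ → ℝ} {k : ℝ} (hk : 0 < k)
    (h : AEMeasurable v (volume.restrict (Set.Ioi 0))) :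
    AEMeasurable (fun r => v (k * r)) (volume.restrict (Set.Ioi (0:ℝ))) := by
  have hk0 : k ≠ 0 := ne_of_gt hk
  have hemb : MeasurableEmbedding (fun r : ℝ => k * r) := by
    have := (Homeomorph.mulLeft₀ k hk0).measurableEmbedding
    rwa [Homeomorph.coe_mulLeft₀] at this
  have hpre : (fun r : ℝ => k * r) ⁻¹' (Set.Ioi 0) = Set.Ioi (0:ℝ) := by
    ext x
    simp only [Set.mem_preimage, Set.mem_Ioi]
    constructor <;> intro hx <;> nlinarith
  have hmap : Measure.map (fun r : ℝ => k * r) (volume.restrict (Set.Ioi 0))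
      = ENNReal.ofReal |k⁻¹| • (volume.restrict (Set.Ioi (0:ℝ))) := by
    conv_lhs => rw [← hpre]
    rw [← Measure.restrict_map hemb.measurable measurableSet_Ioi]
    rw [show (fun r : ℝ => k * r) = (k * ·) from rfl, Real.map_volume_mul_left hk0,
      Measure.restrict_smul]
  have : AEMeasurable v (Measure.map (fun r : ℝ => k * r) (volume.restrict (Set.Ioi 0))) := by
    rw [hmap, aemeasurable_smul_measure_iff (by simp [hk0])]
    exact h
  exact hemb.aemeasurable_map_iff.1 this

lemma key_poisson {σ ρ : ℝ} (hσ : 0 < σ) (hρ : 1 < ρ) (u : ℝ → ℝ) :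
    eVar ρ (fun τ => (1 / Real.Gamma σ) * ∫ r in Set.Ioi (0:ℝ),
      Real.exp (-r) * u (τ ^ 2 / (4 * r)) * r ^ (σ - 1)) ≤ eVar ρ u := by
  have hρ0 : (0:ℝ) < ρ := by linarith
  have hρ0' : ρ ≠ 0 := ne_of_gt hρ0
  set V : ℝ≥0∞ := eVar ρ u with hV
  rcases eq_or_ne V ∞ with hVtop | hVtop
  · rw [eVar]; exact hVtop ▸ le_top
  set γ : ℝ := Real.Gamma σ with hγ
  have hγpos : 0 < γ := Real.Gamma_pos_of_pos hσ
  set g : ℝ → ℝ := fun τ => (1 / γ) * ∫ r in Set.Ioi (0:ℝ),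
      Real.exp (-r) * u (τ ^ 2 / (4 * r)) * r ^ (σ - 1) with hg
  set I : ℝ → ℝ → ℝ := fun τ r => Real.exp (-r) * u (τ ^ 2 / (4 * r)) * r ^ (σ - 1) with hI
  -- boundedness of u on (0, ∞)
  set B : ℝ := |u 1| + V.toReal with hB
  have hub : ∀ x : ℝ, 0 < x → |u x| ≤ B := by
    intro x hx
    have h1 : ENNReal.ofReal |u x - u 1| ≤ V := evar_pair hρ0 u hx one_pos
    have h2 : |u x - u 1| ≤ V.toReal := by
      rw [← ENNReal.ofReal_le_iff_le_toReal hVtop]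
      exact h1
    calc |u x| ≤ |u 1| + |u x - u 1| := by
          have := abs_sub_abs_le_abs_sub (u x) (u 1); linarith [abs_nonneg (u x - u 1)]
      _ ≤ B := by rw [hB]; linarith
  -- the measurability dichotomy
  by_cases hPm : AEMeasurable (fun r => u (1 / r)) (volume.restrict (Set.Ioi (0:ℝ)))
  · -- measurable case
    have haem : ∀ τ : ℝ, 0 < τ →
        AEMeasurable (fun r => u (τ ^ 2 / (4 * r))) (volume.restrict (Set.Ioi (0:ℝ))) := by
      intro τ hτ
      have hk : (0:ℝ) < 4 / τ ^ 2 := by positivity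
      have := aemeas_scale hk hPm
      refine this.congr (Filter.EventuallyEq.of_eq ?_)
      funext r
      congr 1
      have hτ2 : τ ^ 2 ≠ 0 := by positivity
      rcases eq_or_ne r 0 with hr | hr
      · simp [hr]
      · field_simp
    have hint : ∀ τ : ℝ, 0 < τ → IntegrableOn (I τ) (Set.Ioi (0:ℝ)) := by
      intro τ hτ
      have hsm : AEStronglyMeasurable (I τ) (volume.restrict (Set.Ioi (0:ℝ))) := by
        apply AEMeasurable.aestronglyMeasurable
        exact ((Real.measurable_exp.comp measurable_neg).aemeasurable.mul (haem τ hτ)).mul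
          (by measurability : Measurable (fun r : ℝ => r ^ (σ - 1))).aemeasurable
      apply Integrable.mono' (((Real.GammaIntegral_convergent hσ)).const_mul B) hsm
      filter_upwards [ae_restrict_mem measurableSet_Ioi] with r hr
      have hr0 : (0:ℝ) < r := hr
      have hrp : (0:ℝ) < r ^ (σ - 1) := Real.rpow_pos_of_pos hr0 _
      have he : (0:ℝ) < Real.exp (-r) := Real.exp_pos _
      have harg : 0 < τ ^ 2 / (4 * r) := by positivity
      have hu := hub _ harg
      have : ‖I τ r‖ = Real.exp (-r) * |u (τ ^ 2 / (4 * r))| * r ^ (σ - 1) := by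
        rw [hI]; simp only [Real.norm_eq_abs, abs_mul, abs_of_pos he, abs_of_pos hrp]
      rw [this]
      calc Real.exp (-r) * |u (τ ^ 2 / (4 * r))| * r ^ (σ - 1)
          = (Real.exp (-r) * r ^ (σ - 1)) * |u (τ ^ 2 / (4 * r))| := by ring
        _ ≤ (Real.exp (-r) * r ^ (σ - 1)) * B :=
            mul_le_mul_of_nonneg_left hu (by positivity)
        _ = B * (Real.exp (-r) * r ^ (σ - 1)) := by ring
    -- difference formula
    have hdiff : ∀ i j : ℝ, 0 < i → 0 < j → g i - g j =
        (1 / γ) * ∫ r in Set.Ioi (0:ℝ), (I i r - I j r) := by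
      intro i j hi hj
      rw [hg]
      simp only
      rw [integral_sub (hint i hi) (hint j hj)]
      ring
    -- weighted measure
    set w : ℝ → ℝ≥0∞ := fun r => ENNReal.ofReal (Real.exp (-r) * r ^ (σ - 1)) with hw
    have hwm : Measurable w :=
      ((Real.measurable_exp.comp measurable_neg).mul
        (by measurability : Measurable (fun r : ℝ => r ^ (σ - 1)))).ennreal_ofReal
    set μ : Measure ℝ := (volume.restrict (Set.Ioi 0)).withDensity w with hμ
    have hμuniv : μ Set.univ = ENNReal.ofReal γ := by
      rw [hμ, withDensity_apply _ MeasurableSet.univ, Measure.restrict_univ]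
      rw [← MeasureTheory.ofReal_integral_eq_lintegral_ofReal
        (Real.GammaIntegral_convergent hσ) ?_]
      · rw [hγ, Real.Gamma_eq_integral hσ]
      · filter_upwards [ae_restrict_mem measurableSet_Ioi] with r hr
        have hr0 : (0:ℝ) < r := hr
        positivity
    rw [eVar]
    apply iSup_le
    rintro ⟨T, hTanti, hTpos, hTlim⟩
    simp only
    set G : ℕ → ℝ → ℝ≥0∞ := fun i r =>
      ENNReal.ofReal |u ((T i) ^ 2 / (4 * r)) - u ((T (i+1)) ^ 2 / (4 * r))| with hG
    have hGm : ∀ i, AEMeasurable (G i) (volume.restrict (Set.Ioi (0:ℝ))) := fun i =>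
      (continuous_abs.measurable.comp_aemeasurable
        ((haem _ (hTpos i)).sub (haem _ (hTpos (i+1))))).ennreal_ofReal
    have hGμ : ∀ i, AEMeasurable (G i) μ := fun i =>
      (hGm i).mono_ac (withDensity_absolutelyContinuous _ _)
    have hterm : ∀ i : ℕ, ENNReal.ofReal |g (T i) - g (T (i+1))| ≤
        ENNReal.ofReal (1 / γ) * ∫⁻ r, G i r ∂μ := by
      intro i
      rw [hdiff _ _ (hTpos i) (hTpos (i+1))]
      have hDint : IntegrableOn (fun r => I (T i) r - I (T (i+1)) r) (Set.Ioi 0) :=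
        (hint _ (hTpos i)).sub (hint _ (hTpos (i+1)))
      rw [abs_mul, abs_of_pos (by positivity : (0:ℝ) < 1/γ),
        ENNReal.ofReal_mul (by positivity : (0:ℝ) ≤ 1/γ)]
      refine mul_le_mul' le_rfl ?_
      calc ENNReal.ofReal |∫ r in Set.Ioi (0:ℝ), (I (T i) r - I (T (i+1)) r)|
          ≤ ENNReal.ofReal (∫ r in Set.Ioi (0:ℝ), |I (T i) r - I (T (i+1)) r|) := by
            apply ENNReal.ofReal_le_ofReal
            simpa [Real.norm_eq_abs] using
              norm_integral_le_integral_norm (μ := volume.restrict (Set.Ioi 0))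
                (fun r => I (T i) r - I (T (i+1)) r)
        _ = ∫⁻ r in Set.Ioi (0:ℝ), ENNReal.ofReal |I (T i) r - I (T (i+1)) r| :=
            MeasureTheory.ofReal_integral_eq_lintegral_ofReal hDint.abs
              (Filter.Eventually.of_forall fun r => abs_nonneg _)
        _ = ∫⁻ r in Set.Ioi (0:ℝ), (w * G i) r := by
            apply lintegral_congr_ae
            filter_upwards [ae_restrict_mem measurableSet_Ioi] with r hr
            have hr0 : (0:ℝ) < r := hr
            have hwp : (0:ℝ) < Real.exp (-r) * r ^ (σ - 1) := by positivity
            have heq : I (T i) r - I (T (i+1)) r = (Real.exp (-r) * r ^ (σ - 1)) *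
                (u ((T i) ^ 2 / (4 * r)) - u ((T (i+1)) ^ 2 / (4 * r))) := by
              rw [hI]; ring
            rw [heq, abs_mul, abs_of_pos hwp,
              ENNReal.ofReal_mul (le_of_lt hwp)]
            rfl
        _ = ∫⁻ r, G i r ∂μ :=
            (lintegral_withDensity_eq_lintegral_mul₀' hwm.aemeasurable (hGμ i)).symm
    have hΦ : ∀ r : ℝ, 0 < r → (∑' i, (G i r) ^ ρ) ^ (1/ρ) ≤ V := by
      intro r hr
      have h4r : (0:ℝ) < 4 * r := by linarith
      refine le_trans (le_of_eq ?_) (evar_seq_le ρ u (fun i => (T i) ^ 2 / (4 * r))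
        ⟨?_, ?_, ?_⟩)
      · rfl
      · intro m n hmn
        simp only
        have h2 : (T n) ^ 2 < (T m) ^ 2 := by
          have := hTanti hmn
          nlinarith [hTpos n, hTpos m]
        rw [div_lt_div_iff₀ h4r h4r]
        nlinarith
      · intro i
        exact div_pos (pow_pos (hTpos i) 2) h4r
      · have h1 : Tendsto (fun i => (T i) ^ 2) atTop (nhds 0) := by
          have := hTlim.pow 2
          simpa using this
        have := h1.div_const (4 * r)
        simpa using this
    calc (∑' i, (ENNReal.ofReal |g (T i) - g (T (i+1))|) ^ ρ) ^ (1/ρ)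
        ≤ (∑' i, (ENNReal.ofReal (1/γ) * ∫⁻ r, G i r ∂μ) ^ ρ) ^ (1/ρ) := by
          apply ENNReal.rpow_le_rpow _ (by positivity)
          exact ENNReal.tsum_le_tsum fun i =>
            ENNReal.rpow_le_rpow (hterm i) (le_of_lt hρ0)
      _ = ENNReal.ofReal (1/γ) * (∑' i, (∫⁻ r, G i r ∂μ) ^ ρ) ^ (1/ρ) := by
          simp_rw [ENNReal.mul_rpow_of_nonneg _ _ (le_of_lt hρ0)]
          rw [ENNReal.tsum_mul_left,
            ENNReal.mul_rpow_of_nonneg _ _ (by positivity : (0:ℝ) ≤ 1/ρ),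
            ← ENNReal.rpow_mul, mul_one_div_cancel hρ0', ENNReal.rpow_one]
      _ ≤ ENNReal.ofReal (1/γ) * ∫⁻ r, (∑' i, (G i r) ^ ρ) ^ (1/ρ) ∂μ :=
          mul_le_mul' le_rfl (minkowski_tsum μ hρ G hGμ)
      _ ≤ ENNReal.ofReal (1/γ) * (V * μ Set.univ) := by
          refine mul_le_mul' le_rfl ?_
          have hae : ∀ᵐ r ∂μ, r ∈ Set.Ioi (0:ℝ) :=
            (withDensity_absolutelyContinuous _ _).ae_le
              (ae_restrict_mem measurableSet_Ioi)
          calc ∫⁻ r, (∑' i, (G i r) ^ ρ) ^ (1/ρ) ∂μ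
              ≤ ∫⁻ _, V ∂μ := by
                apply lintegral_mono_ae
                filter_upwards [hae] with r hr
                exact hΦ r hr
            _ = V * μ Set.univ := lintegral_const V
      _ = V := by
          rw [hμuniv,
            show ENNReal.ofReal (1/γ) * (V * ENNReal.ofReal γ)
              = (ENNReal.ofReal (1/γ) * ENNReal.ofReal γ) * V by ring,
            ← ENNReal.ofReal_mul (by positivity : (0:ℝ) ≤ 1/γ),
            one_div_mul_cancel (ne_of_gt hγpos), ENNReal.ofReal_one, one_mul]
  · -- non-measurable case : all the integrals are zero
    have hnint : ∀ τ : ℝ, 0 < τ → ¬ IntegrableOn (I τ) (Set.Ioi (0:ℝ)) := by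
      intro τ hτ hcon
      apply hPm
      have h1 : AEMeasurable (I τ) (volume.restrict (Set.Ioi (0:ℝ))) :=
        hcon.aemeasurable
      have h2 : AEMeasurable (fun r => u (τ ^ 2 / (4 * r)))
          (volume.restrict (Set.Ioi (0:ℝ))) := by
        have hm : Measurable (fun r : ℝ => Real.exp r * r ^ (1 - σ)) := by measurability
        refine (h1.mul hm.aemeasurable).congr ?_
        filter_upwards [ae_restrict_mem measurableSet_Ioi] with r hr
        have hr0 : (0:ℝ) < r := hr
        rw [hI]
        simp only [Pi.mul_apply]
        rw [show Real.exp (-r) * u (τ ^ 2 / (4 * r)) * r ^ (σ - 1) *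
              (Real.exp r * r ^ (1 - σ))
            = u (τ ^ 2 / (4 * r)) * ((Real.exp (-r) * Real.exp r) *
              (r ^ (σ - 1) * r ^ (1 - σ))) by ring]
        rw [← Real.exp_add, ← Real.rpow_add hr0]
        norm_num
      have hk : (0:ℝ) < τ ^ 2 / 4 := by positivity
      have := aemeas_scale hk h2
      refine this.congr (Filter.EventuallyEq.of_eq ?_)
      funext r
      congr 1
      have hτ2 : τ ^ 2 ≠ 0 := by positivity
      rcases eq_or_ne r 0 with hr | hr
      · simp [hr]
      · field_simp
    have hzero : ∀ τ : ℝ, 0 < τ → g τ = 0 := by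
      intro τ hτ
      rw [hg]
      simp only
      rw [integral_undef (hnint τ hτ), mul_zero]
    rw [eVar]
    apply iSup_le
    rintro ⟨T, hTanti, hTpos, hTlim⟩
    simp only
    have : ∀ i : ℕ, (ENNReal.ofReal |g (T i) - g (T (i+1))|) ^ ρ = 0 := by
      intro i
      rw [hzero _ (hTpos i), hzero _ (hTpos (i+1))]
      simp [ENNReal.zero_rpow_of_pos hρ0]
    rw [tsum_congr this]
    simp only [tsum_zero]
    rw [ENNReal.zero_rpow_of_pos (by positivity)]
    exact zero_le

/-- If the variation operator of the heat semigroup `S t = e^{-tL}` is bounded on `L^p(ℝⁿ)`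
with norm `Cp p` for all `1 < p < ∞`, `ρ > 2`, then so is the variation operator of the
generalized Poisson operators
`P^σ_t f = Γ(σ)⁻¹ ∫_0^∞ e^{-r} e^{-t²L/(4r)} f r^{σ-1} dr`, `0 < σ < 1`. -/
theorem variation_generalized_poisson (n : ℕ) (hn : 1 ≤ n)
    (S : ℝ → (EuclideanSpace ℝ (Fin n) → ℝ) → EuclideanSpace ℝ (Fin n) → ℝ)
    (Cp : ℝ → ℝ)
    (hS : ∀ p ρ : ℝ, 1 < p → 2 < ρ → ∀ f : EuclideanSpace ℝ (Fin n) → ℝ,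
      (∫⁻ x, (eVar ρ (fun t => S t f x)) ^ p) ^ (1 / p) ≤
        ENNReal.ofReal (Cp p) * (∫⁻ x, ENNReal.ofReal (|f x| ^ p)) ^ (1 / p))
    (σ : ℝ) (hσ : 0 < σ) (hσ1 : σ < 1) :
    ∀ p ρ : ℝ, 1 < p → 2 < ρ → ∀ f : EuclideanSpace ℝ (Fin n) → ℝ,
      (∫⁻ x, (eVar ρ (fun t =>
          (1 / Real.Gamma σ) * ∫ r in Set.Ioi (0 : ℝ),
            Real.exp (-r) * S (t ^ 2 / (4 * r)) f x * r ^ (σ - 1))) ^ p) ^ (1 / p) ≤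
        ENNReal.ofReal (Cp p) * (∫⁻ x, ENNReal.ofReal (|f x| ^ p)) ^ (1 / p) := by
  intro p ρ hp hρ f
  have hρ1 : (1:ℝ) < ρ := by linarith
  have hkey : ∀ x, eVar ρ (fun t => (1 / Real.Gamma σ) * ∫ r in Set.Ioi (0 : ℝ),
      Real.exp (-r) * S (t ^ 2 / (4 * r)) f x * r ^ (σ - 1)) ≤
      eVar ρ (fun t => S t f x) := fun x =>
    key_poisson hσ hρ1 (fun t => S t f x)
  calc (∫⁻ x, (eVar ρ (fun t => (1 / Real.Gamma σ) * ∫ r in Set.Ioi (0 : ℝ),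
          Real.exp (-r) * S (t ^ 2 / (4 * r)) f x * r ^ (σ - 1))) ^ p) ^ (1 / p)
      ≤ (∫⁻ x, (eVar ρ (fun t => S t f x)) ^ p) ^ (1 / p) := by
        apply ENNReal.rpow_le_rpow _ (by positivity)
        exact lintegral_mono fun x => ENNReal.rpow_le_rpow (hkey x) (by linarith)
    _ ≤ ENNReal.ofReal (Cp p) * (∫⁻ x, ENNReal.ofReal (|f x| ^ p)) ^ (1 / p) :=
        hS p ρ hp hρ f
end
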